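/- arXiv:1801.04556 — 3 statements merged into one kernel-verified Lean document; each statement's English description precedes it below -/
import Mathlib

section
/- Let (r₁,θ₁) ≠ (r₂,θ₂) be two distinct parameter pairs in ℝ × [0,π), so that l(r₁,θ₁) and l(r₂,θ₂) are two distinct lines, with arclength parametrizations p₁(t) = (t·cos θ₁ − r₁·sin θ₁, t·sin θ₁ + r₁·cos θ₁) and p₂(t) = (t·cos θ₂ − r₂·sin θ₂, t·sin θ₂ + r₂·cos θ₂). Then the set of (s, t, u, v) ∈ ℝ⁴ for which there exists a ∈ ℝ² with ‖p₁(s) − a‖ = ‖p₁(t) − a‖ = ‖p₂(u) − a‖ = ‖p₂(v) − a‖ has Lebesgue measure zero in ℝ⁴. (This is the case of two points on each of two lines in the proof that no four points of the Poisson line Cox process are concyclic.) -/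
open MeasureTheory Real

/-- The arclength parametrization of the line `l(r,θ)`: `p(t) = (t cos θ − r sin θ, t sin θ + r cos θ)`. -/
noncomputable def linePt (r θ t : ℝ) : EuclideanSpace ℝ (Fin 2) :=
  (WithLp.equiv 2 (Fin 2 → ℝ)).symm
    ![t * Real.cos θ - r * Real.sin θ, t * Real.sin θ + r * Real.cos θ]

lemma normEq {r θ t r' θ' t' : ℝ} {a : EuclideanSpace ℝ (Fin 2)}
    (h : ‖linePt r θ t - a‖ = ‖linePt r' θ' t' - a‖) :
    (t * Real.cos θ - r * Real.sin θ - a 0) ^ 2 + (t * Real.sin θ + r * Real.cos θ - a 1) ^ 2 =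
      (t' * Real.cos θ' - r' * Real.sin θ' - a 0) ^ 2 +
        (t' * Real.sin θ' + r' * Real.cos θ' - a 1) ^ 2 := by
  rw [EuclideanSpace.norm_eq, EuclideanSpace.norm_eq] at h
  have h2 := (Real.sqrt_inj (by positivity) (by positivity)).mp h
  simpa [Fin.sum_univ_two, linePt, WithLp.equiv_symm_apply, PiLp.toLp_apply, sub_sq] using h2

lemma ae_ne' (c : ℝ) : ∀ᵐ t : ℝ, t ≠ c := by
  rw [MeasureTheory.ae_iff]
  simp [Set.setOf_eq_eq_singleton]

lemma lin_null (α β : ℝ) (hα : α ≠ 0) : volume {v : ℝ | α * v + β = 0} = 0 := by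
  refine measure_mono_null (fun v hv => ?_) (measure_singleton (-β / α))
  have hv' : α * v + β = 0 := hv
  have : v = -β / α := by field_simp; linarith
  simpa [Set.mem_singleton_iff] using this

lemma null4 (f : ℝ → ℝ → ℝ → ℝ → ℝ)
    (hf : Measurable fun x : ℝ × ℝ × ℝ × ℝ => f x.1 x.2.1 x.2.2.1 x.2.2.2)
    (h : ∀ s : ℝ, ∀ᵐ t : ℝ, ∀ᵐ u : ℝ, volume {v : ℝ | f s t u v = 0} = 0) :
    volume {x : ℝ × ℝ × ℝ × ℝ | f x.1 x.2.1 x.2.2.1 x.2.2.2 = 0} = 0 := by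
  have hm : MeasurableSet {x : ℝ × ℝ × ℝ × ℝ | f x.1 x.2.1 x.2.2.1 x.2.2.2 = 0} :=
    hf (measurableSet_singleton 0)
  rw [MeasureTheory.Measure.volume_eq_prod, MeasureTheory.Measure.measure_prod_null hm]
  refine Filter.Eventually.of_forall fun s => ?_
  show volume (Prod.mk s ⁻¹' _) = 0
  have hf2 : Measurable fun y : ℝ × ℝ × ℝ => f s y.1 y.2.1 y.2.2 :=
    hf.comp measurable_prodMk_left
  have hm2 : MeasurableSet {y : ℝ × ℝ × ℝ | f s y.1 y.2.1 y.2.2 = 0} :=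
    hf2 (measurableSet_singleton 0)
  show volume {y : ℝ × ℝ × ℝ | f s y.1 y.2.1 y.2.2 = 0} = 0
  rw [MeasureTheory.Measure.volume_eq_prod, MeasureTheory.Measure.measure_prod_null hm2]
  filter_upwards [h s] with t ht
  have hf3 : Measurable fun z : ℝ × ℝ => f s t z.1 z.2 :=
    hf2.comp measurable_prodMk_left
  have hm3 : MeasurableSet {z : ℝ × ℝ | f s t z.1 z.2 = 0} :=
    hf3 (measurableSet_singleton 0)
  show volume {z : ℝ × ℝ | f s t z.1 z.2 = 0} = 0
  rw [MeasureTheory.Measure.volume_eq_prod, MeasureTheory.Measure.measure_prod_null hm3]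
  filter_upwards [ht] with u hu
  exact hu

/-- set where first two coordinates agree is null -/
lemma null_st : volume {x : ℝ × ℝ × ℝ × ℝ | x.1 - x.2.1 = 0} = 0 := by
  have := null4 (fun s t _ _ => s - t) (by fun_prop) (fun s => by
    filter_upwards [ae_ne' s] with t ht
    refine Filter.Eventually.of_forall fun u => ?_
    have hss : {v : ℝ | s - t = 0} = ∅ := by
      ext v
      simp only [Set.mem_setOf_eq, Set.mem_empty_iff_false, iff_false, sub_eq_zero]
      exact fun h => ht h.symm
    rw [hss]
    simp)
  simpa using this

lemma null_uv : volume {x : ℝ × ℝ × ℝ × ℝ | x.2.2.1 - x.2.2.2 = 0} = 0 := by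
  have := null4 (fun _ _ u v => u - v) (by fun_prop) (fun s => by
    refine Filter.Eventually.of_forall fun t => ?_
    refine Filter.Eventually.of_forall fun u => ?_
    refine measure_mono_null (fun v hv => ?_) (measure_singleton u)
    have : u - v = 0 := hv
    simp [Set.mem_singleton_iff]; linarith)
  simpa using this

/-- Two points on each of two distinct lines `l(r₁,θ₁) ≠ l(r₂,θ₂)`: the set of parameters
`(s,t,u,v)` for which `p₁(s), p₁(t), p₂(u), p₂(v)` lie on a common circle has Lebesgue
measure zero in `ℝ⁴`. -/
theorem concyclic_two_two_null (r₁ θ₁ r₂ θ₂ : ℝ)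
    (hθ₁ : θ₁ ∈ Set.Ico 0 Real.pi) (hθ₂ : θ₂ ∈ Set.Ico 0 Real.pi)
    (hne : (r₁, θ₁) ≠ (r₂, θ₂)) :
    MeasureTheory.volume
      {x : ℝ × ℝ × ℝ × ℝ | ∃ a : EuclideanSpace ℝ (Fin 2),
        ‖linePt r₁ θ₁ x.1 - a‖ = ‖linePt r₁ θ₁ x.2.1 - a‖ ∧
        ‖linePt r₁ θ₁ x.2.1 - a‖ = ‖linePt r₂ θ₂ x.2.2.1 - a‖ ∧
        ‖linePt r₂ θ₂ x.2.2.1 - a‖ = ‖linePt r₂ θ₂ x.2.2.2 - a‖} = 0 := by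
  set c₁ := Real.cos θ₁; set s₁ := Real.sin θ₁
  set c₂ := Real.cos θ₂; set s₂ := Real.sin θ₂
  have py₁ : s₁ ^ 2 + c₁ ^ 2 = 1 := Real.sin_sq_add_cos_sq θ₁
  have py₂ : s₂ ^ 2 + c₂ ^ 2 = 1 := Real.sin_sq_add_cos_sq θ₂
  rcases eq_or_ne θ₁ θ₂ with hθ | hθ
  · -- same angle: forces s+t = u+v
    subst hθ
    have hsub : {x : ℝ × ℝ × ℝ × ℝ | ∃ a : EuclideanSpace ℝ (Fin 2),
        ‖linePt r₁ θ₁ x.1 - a‖ = ‖linePt r₁ θ₁ x.2.1 - a‖ ∧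
        ‖linePt r₁ θ₁ x.2.1 - a‖ = ‖linePt r₂ θ₁ x.2.2.1 - a‖ ∧
        ‖linePt r₂ θ₁ x.2.2.1 - a‖ = ‖linePt r₂ θ₁ x.2.2.2 - a‖} ⊆
        {x : ℝ × ℝ × ℝ × ℝ | x.1 - x.2.1 = 0} ∪ {x | x.2.2.1 - x.2.2.2 = 0} ∪
        {x | x.1 + x.2.1 - x.2.2.1 - x.2.2.2 = 0} := by
      rintro ⟨s, t, u, v⟩ ⟨a, h1, h2, h3⟩
      by_cases hst : s = t
      · exact Or.inl (Or.inl (by simp [hst]))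
      by_cases huv : u = v
      · exact Or.inl (Or.inr (by simp [huv]))
      right
      have e1 := normEq h1
      have e2 := normEq h2
      have e3 := normEq h3
      have f1 : (s - t) * (s + t - 2 * (c₁ * a 0 + s₁ * a 1)) = 0 := by
        linear_combination e1 - (s ^ 2 - t ^ 2) * py₁
      have f3 : (u - v) * (u + v - 2 * (c₁ * a 0 + s₁ * a 1)) = 0 := by
        linear_combination e3 - (u ^ 2 - v ^ 2) * py₁
      have hA : c₁ * a 0 + s₁ * a 1 = (s + t) / 2 := by
        rcases mul_eq_zero.mp f1 with h | h
        · exact absurd (by linarith) hst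
        · linarith
      have hA' : c₁ * a 0 + s₁ * a 1 = (u + v) / 2 := by
        rcases mul_eq_zero.mp f3 with h | h
        · exact absurd (by linarith) huv
        · linarith
      show s + t - u - v = 0
      linarith [hA, hA']
    refine measure_mono_null hsub ?_
    refine measure_union_null (measure_union_null null_st null_uv) ?_
    have := null4 (fun s t u v => s + t - u - v) (by fun_prop) (fun s => by
      refine Filter.Eventually.of_forall fun t => ?_
      refine Filter.Eventually.of_forall fun u => ?_
      refine measure_mono_null (fun v hv => ?_) (measure_singleton (s + t - u))
      have : s + t - u - v = 0 := hv
      simp [Set.mem_singleton_iff]; linarith)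
    simpa using this
  · -- distinct angles
    have hD : c₁ * s₂ - s₁ * c₂ ≠ 0 := by
      have : c₁ * s₂ - s₁ * c₂ = Real.sin (θ₂ - θ₁) := by
        rw [Real.sin_sub]; ring
      rw [this, ne_eq,
        Real.sin_eq_zero_iff_of_lt_of_lt (x := θ₂ - θ₁)
          (by linarith [hθ₁.2, hθ₂.1]) (by linarith [hθ₂.2, hθ₁.1])]
      exact sub_ne_zero.mpr (Ne.symm hθ)
    set D := c₁ * s₂ - s₁ * c₂ with hDdef
    set K := c₁ * c₂ + s₁ * s₂ with hKdef
    have hsub : {x : ℝ × ℝ × ℝ × ℝ | ∃ a : EuclideanSpace ℝ (Fin 2),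
        ‖linePt r₁ θ₁ x.1 - a‖ = ‖linePt r₁ θ₁ x.2.1 - a‖ ∧
        ‖linePt r₁ θ₁ x.2.1 - a‖ = ‖linePt r₂ θ₂ x.2.2.1 - a‖ ∧
        ‖linePt r₂ θ₂ x.2.2.1 - a‖ = ‖linePt r₂ θ₂ x.2.2.2 - a‖} ⊆
        {x : ℝ × ℝ × ℝ × ℝ | x.1 - x.2.1 = 0} ∪ {x | x.2.2.1 - x.2.2.2 = 0} ∪
        {x | (D * x.2.2.1 + (r₂ * K - r₁)) * x.2.2.2 +
          (D * (r₁ ^ 2 - r₂ ^ 2) - D * x.2.1 * x.1 + (r₁ * K - r₂) * (x.1 + x.2.1)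
            + (r₂ * K - r₁) * x.2.2.1) = 0} := by
      rintro ⟨s, t, u, v⟩ ⟨a, h1, h2, h3⟩
      by_cases hst : s = t
      · exact Or.inl (Or.inl (by simp [hst]))
      by_cases huv : u = v
      · exact Or.inl (Or.inr (by simp [huv]))
      right
      have e1 := normEq h1
      have e2 := normEq h2
      have e3 := normEq h3
      have f1 : (s - t) * (s + t - 2 * (c₁ * a 0 + s₁ * a 1)) = 0 := by
        linear_combination e1 - (s ^ 2 - t ^ 2) * py₁
      have f3 : (u - v) * (u + v - 2 * (c₂ * a 0 + s₂ * a 1)) = 0 := by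
        linear_combination e3 - (u ^ 2 - v ^ 2) * py₂
      have hA : c₁ * a 0 + s₁ * a 1 = (s + t) / 2 := by
        rcases mul_eq_zero.mp f1 with h | h
        · exact absurd (by linarith) hst
        · linarith
      have hA' : c₂ * a 0 + s₂ * a 1 = (u + v) / 2 := by
        rcases mul_eq_zero.mp f3 with h | h
        · exact absurd (by linarith) huv
        · linarith
      have e2' : t ^ 2 + r₁ ^ 2 - 2 * t * (c₁ * a 0 + s₁ * a 1)
            - 2 * r₁ * (c₁ * a 1 - s₁ * a 0)
          = u ^ 2 + r₂ ^ 2 - 2 * u * (c₂ * a 0 + s₂ * a 1)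
            - 2 * r₂ * (c₂ * a 1 - s₂ * a 0) := by
        linear_combination e2 - (t ^ 2 + r₁ ^ 2) * py₁ + (u ^ 2 + r₂ ^ 2) * py₂
      have e2'' : -(t * s) + r₁ ^ 2 - 2 * r₁ * (c₁ * a 1 - s₁ * a 0)
          = -(u * v) + r₂ ^ 2 - 2 * r₂ * (c₂ * a 1 - s₂ * a 0) := by
        linear_combination e2' + 2 * t * hA - 2 * u * hA'
      have hB : D * (c₁ * a 1 - s₁ * a 0) = -K * ((s + t) / 2) + (u + v) / 2 := by
        linear_combination (-K) * hA + hA' + (c₂ * a 0 + s₂ * a 1) * py₁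
      have hB' : D * (c₂ * a 1 - s₂ * a 0) = -((s + t) / 2) + K * ((u + v) / 2) := by
        linear_combination (-1 : ℝ) * hA + K * hA' - (c₁ * a 0 + s₁ * a 1) * py₂
      show (D * u + (r₂ * K - r₁)) * v +
          (D * (r₁ ^ 2 - r₂ ^ 2) - D * t * s + (r₁ * K - r₂) * (s + t)
            + (r₂ * K - r₁) * u) = 0
      linear_combination D * e2'' + 2 * r₁ * hB - 2 * r₂ * hB'
    refine measure_mono_null hsub ?_
    refine measure_union_null (measure_union_null null_st null_uv) ?_
    have := null4 (fun s t u v => (D * u + (r₂ * K - r₁)) * v +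
        (D * (r₁ ^ 2 - r₂ ^ 2) - D * t * s + (r₁ * K - r₂) * (s + t) + (r₂ * K - r₁) * u))
      (by fun_prop) (fun s => by
        refine Filter.Eventually.of_forall fun t => ?_
        filter_upwards [ae_ne' ((r₁ - r₂ * K) / D)] with u hu
        have hc : D * u + (r₂ * K - r₁) ≠ 0 := by
          intro h
          apply hu
          field_simp
          linarith
        exact lin_null _ _ hc)
    simpa using this
end

section
/- Let (r₁,θ₁), (r₂,θ₂), (r₃,θ₃), (r₄,θ₄) be pairwise distinct parameter pairs in ℝ × [0,π), determining four pairwise distinct lines with arclength parametrizations pᵢ(t) = (t·cos θᵢ − rᵢ·sin θᵢ, t·sin θᵢ + rᵢ·cos θᵢ). Then the set of (t₁, t₂, t₃, t₄) ∈ ℝ⁴ for which there exists a ∈ ℝ² with ‖p₁(t₁) − a‖ = ‖p₂(t₂) − a‖ = ‖p₃(t₃) − a‖ = ‖p₄(t₄) − a‖ has Lebesgue measure zero in ℝ⁴. (This is the case of one point on each of four lines in the proof that no four points of the Poisson line Cox process are concyclic.) -/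
open MeasureTheory

/-! ### Auxiliary polynomial expressions -/

noncomputable def lX (r θ t : ℝ) : ℝ := t * Real.cos θ - r * Real.sin θ
noncomputable def lY (r θ t : ℝ) : ℝ := t * Real.sin θ + r * Real.cos θ

/-- The coefficient of `t₂` in `mC`. -/
noncomputable def aC (θ₂ r₃ θ₃ r₄ θ₄ t₃ t₄ : ℝ) : ℝ :=
  Real.cos θ₂ * (lY r₃ θ₃ t₃ - lY r₄ θ₄ t₄) - Real.sin θ₂ * (lX r₃ θ₃ t₃ - lX r₄ θ₄ t₄)

/-- Twice the signed area of the triangle `p₂(t₂) p₃(t₃) p₄(t₄)`. -/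
noncomputable def mC (r₂ θ₂ r₃ θ₃ r₄ θ₄ t₂ t₃ t₄ : ℝ) : ℝ :=
  (lX r₂ θ₂ t₂ - lX r₃ θ₃ t₃) * (lY r₃ θ₃ t₃ - lY r₄ θ₄ t₄)
  - (lX r₃ θ₃ t₃ - lX r₄ θ₄ t₄) * (lY r₂ θ₂ t₂ - lY r₃ θ₃ t₃)

/-- The concyclicity determinant of the four points. -/
noncomputable def Dp (r₁ θ₁ r₂ θ₂ r₃ θ₃ r₄ θ₄ t₁ t₂ t₃ t₄ : ℝ) : ℝ :=
  ((lX r₁ θ₁ t₁)^2 + (lY r₁ θ₁ t₁)^2 - (lX r₂ θ₂ t₂)^2 - (lY r₂ θ₂ t₂)^2)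
      * mC r₂ θ₂ r₃ θ₃ r₄ θ₄ t₂ t₃ t₄
  - ((lX r₂ θ₂ t₂)^2 + (lY r₂ θ₂ t₂)^2 - (lX r₃ θ₃ t₃)^2 - (lY r₃ θ₃ t₃)^2)
      * ((lX r₁ θ₁ t₁ - lX r₂ θ₂ t₂) * (lY r₃ θ₃ t₃ - lY r₄ θ₄ t₄)
        - (lX r₃ θ₃ t₃ - lX r₄ θ₄ t₄) * (lY r₁ θ₁ t₁ - lY r₂ θ₂ t₂))
  + ((lX r₃ θ₃ t₃)^2 + (lY r₃ θ₃ t₃)^2 - (lX r₄ θ₄ t₄)^2 - (lY r₄ θ₄ t₄)^2)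
      * ((lX r₁ θ₁ t₁ - lX r₂ θ₂ t₂) * (lY r₂ θ₂ t₂ - lY r₃ θ₃ t₃)
        - (lX r₂ θ₂ t₂ - lX r₃ θ₃ t₃) * (lY r₁ θ₁ t₁ - lY r₂ θ₂ t₂))

/-- `Dp` is quadratic in `t₁`, with leading coefficient `mC`. -/
lemma keyDp (r₁ θ₁ r₂ θ₂ r₃ θ₃ r₄ θ₄ t₂ t₃ t₄ t : ℝ) :
    Dp r₁ θ₁ r₂ θ₂ r₃ θ₃ r₄ θ₄ t t₂ t₃ t₄
      = (mC r₂ θ₂ r₃ θ₃ r₄ θ₄ t₂ t₃ t₄) * t^2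
        + (Dp r₁ θ₁ r₂ θ₂ r₃ θ₃ r₄ θ₄ 1 t₂ t₃ t₄ - Dp r₁ θ₁ r₂ θ₂ r₃ θ₃ r₄ θ₄ 0 t₂ t₃ t₄
            - mC r₂ θ₂ r₃ θ₃ r₄ θ₄ t₂ t₃ t₄) * t
        + Dp r₁ θ₁ r₂ θ₂ r₃ θ₃ r₄ θ₄ 0 t₂ t₃ t₄ := by
  have p1 : Real.sin θ₁ ^ 2 + Real.cos θ₁ ^ 2 = 1 := Real.sin_sq_add_cos_sq θ₁
  simp only [Dp, mC, lX, lY]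
  linear_combination ((t^2 - t) *
    (((t₂ * Real.cos θ₂ - r₂ * Real.sin θ₂) - (t₃ * Real.cos θ₃ - r₃ * Real.sin θ₃))
      * ((t₃ * Real.sin θ₃ + r₃ * Real.cos θ₃) - (t₄ * Real.sin θ₄ + r₄ * Real.cos θ₄))
     - ((t₃ * Real.cos θ₃ - r₃ * Real.sin θ₃) - (t₄ * Real.cos θ₄ - r₄ * Real.sin θ₄))
      * ((t₂ * Real.sin θ₂ + r₂ * Real.cos θ₂) - (t₃ * Real.sin θ₃ + r₃ * Real.cos θ₃)))) * p1

/-- `mC` is affine in `t₂`, with leading coefficient `aC`. -/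
lemma keymC (r₂ θ₂ r₃ θ₃ r₄ θ₄ t₃ t₄ t : ℝ) :
    mC r₂ θ₂ r₃ θ₃ r₄ θ₄ t t₃ t₄
      = 0 * t^2 + (aC θ₂ r₃ θ₃ r₄ θ₄ t₃ t₄) * t + mC r₂ θ₂ r₃ θ₃ r₄ θ₄ 0 t₃ t₄ := by
  simp only [mC, aC, lX, lY]; ring

/-- `aC` is affine in `t₃`. -/
lemma keyaC (θ₂ r₃ θ₃ r₄ θ₄ t₄ t : ℝ) :
    aC θ₂ r₃ θ₃ r₄ θ₄ t t₄
      = 0 * t^2 + (Real.cos θ₂ * Real.sin θ₃ - Real.sin θ₂ * Real.cos θ₃) * t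
        + (-(Real.cos θ₂ * Real.sin θ₄ - Real.sin θ₂ * Real.cos θ₄) * t₄
           + (r₃ * (Real.cos θ₂ * Real.cos θ₃ + Real.sin θ₂ * Real.sin θ₃)
              - r₄ * (Real.cos θ₂ * Real.cos θ₄ + Real.sin θ₂ * Real.sin θ₄))) := by
  simp only [aC, lX, lY]; ring

/-! ### Measure-theoretic lemmas -/

/-- The zero set of a nonzero real polynomial of degree at most 2 is Lebesgue-null. -/
lemma quad_null (a b c : ℝ) (h : a ≠ 0 ∨ b ≠ 0 ∨ c ≠ 0) :
    volume {t : ℝ | a*t^2 + b*t + c = 0} = 0 := by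
  have hp : (Polynomial.C a * Polynomial.X^2 + Polynomial.C b * Polynomial.X
      + Polynomial.C c : Polynomial ℝ) ≠ 0 := by
    intro h0
    have h2 : a = 0 := by have := congrArg (Polynomial.coeff · 2) h0; simpa using this
    have h1 : b = 0 := by have := congrArg (Polynomial.coeff · 1) h0; simpa using this
    have hc : c = 0 := by have := congrArg (Polynomial.coeff · 0) h0; simpa using this
    rcases h with h|h|h <;> contradiction
  have hfin : {t : ℝ | a*t^2 + b*t + c = 0}.Finite := by
    apply (Polynomial.finite_setOf_isRoot hp).subset
    intro t ht
    simpa [Polynomial.IsRoot] using ht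
  exact hfin.measure_zero _

/-- Fubini: a measurable set whose slices in the first coordinate are a.e. null is null. -/
lemma null_of_ae_slices {X : Type*} [MeasureSpace X] [SigmaFinite (volume : Measure X)]
    {s : Set (ℝ × X)} (hs : MeasurableSet s)
    (h : ∀ᵐ x : X, volume {t : ℝ | (t, x) ∈ s} = 0) : volume s = 0 := by
  have hswap : MeasurableSet ((Prod.swap : X × ℝ → ℝ × X) ⁻¹' s) := hs.preimage measurable_swap
  have h1 : (volume : Measure (ℝ × X)) s
      = (volume.prod volume : Measure (X × ℝ)) (Prod.swap ⁻¹' s) := by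
    rw [Measure.volume_eq_prod]
    exact ((Measure.measurePreserving_swap).measure_preimage hs.nullMeasurableSet).symm
  rw [h1, Measure.measure_prod_null hswap]
  refine h.mono fun x hx => ?_
  convert hx using 2 <;> rfl

lemma sin_diff_ne {θ θ' : ℝ} (h : θ ∈ Set.Ico 0 Real.pi) (h' : θ' ∈ Set.Ico 0 Real.pi)
    (hne : θ ≠ θ') : Real.cos θ * Real.sin θ' - Real.sin θ * Real.cos θ' ≠ 0 := by
  have he : Real.cos θ * Real.sin θ' - Real.sin θ * Real.cos θ' = Real.sin (θ' - θ) := by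
    rw [Real.sin_sub]; ring
  rw [he]
  rcases lt_or_gt_of_ne hne with hlt | hgt
  · exact ne_of_gt (Real.sin_pos_of_pos_of_lt_pi (by linarith [h.1, h'.1, h.2, h'.2])
      (by linarith [h.1, h'.1, h.2, h'.2]))
  · have hp : Real.sin (θ - θ') > 0 :=
      Real.sin_pos_of_pos_of_lt_pi (by linarith [h.1, h'.1, h.2, h'.2])
        (by linarith [h.1, h'.1, h.2, h'.2])
    rw [show θ' - θ = -(θ - θ') by ring, Real.sin_neg]
    exact neg_ne_zero.mpr (ne_of_gt hp)

lemma sq_norm2 (v : EuclideanSpace ℝ (Fin 2)) : ‖v‖^2 = (v 0)^2 + (v 1)^2 := by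
  rw [EuclideanSpace.norm_eq, Real.sq_sqrt (by positivity)]
  simp [Fin.sum_univ_two, sq_abs]

/-- The null set of `aC` (the triple of lines 2,3,4 being pairwise distinct). -/
lemma aC_null (r₂ θ₂ r₃ θ₃ r₄ θ₄ : ℝ)
    (hθ₂ : θ₂ ∈ Set.Ico 0 Real.pi) (hθ₃ : θ₃ ∈ Set.Ico 0 Real.pi)
    (hθ₄ : θ₄ ∈ Set.Ico 0 Real.pi)
    (h23 : (r₂, θ₂) ≠ (r₃, θ₃)) (h24 : (r₂, θ₂) ≠ (r₄, θ₄)) (h34 : (r₃, θ₃) ≠ (r₄, θ₄)) :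
    volume {z : ℝ × ℝ | aC θ₂ r₃ θ₃ r₄ θ₄ z.1 z.2 = 0} = 0 := by
  by_cases h3 : θ₂ = θ₃
  · by_cases h4 : θ₂ = θ₄
    · -- all three angles equal: the constant term is `r₃ - r₄ ≠ 0`, the set is empty
      have hr : r₃ ≠ r₄ := by
        intro hr; exact h34 (by rw [hr, ← h3, ← h4])
      have hval : ∀ z : ℝ × ℝ, aC θ₂ r₃ θ₃ r₄ θ₄ z.1 z.2 = r₃ - r₄ := by
        intro z
        have p2 : Real.sin θ₂ ^ 2 + Real.cos θ₂ ^ 2 = 1 := Real.sin_sq_add_cos_sq θ₂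
        subst h3; subst h4
        simp only [aC, lX, lY]
        linear_combination (r₃ - r₄) * p2
      have : {z : ℝ × ℝ | aC θ₂ r₃ θ₃ r₄ θ₄ z.1 z.2 = 0} = ∅ := by
        ext z
        simp only [Set.mem_setOf_eq, Set.mem_empty_iff_false, iff_false, hval z]
        exact sub_ne_zero.mpr hr
      rw [this]; exact measure_empty
    · -- θ₂ ≠ θ₄: the `t₄`-coefficient is nonzero
      have hB : -(Real.cos θ₂ * Real.sin θ₄ - Real.sin θ₂ * Real.cos θ₄) ≠ 0 :=
        neg_ne_zero.mpr (sin_diff_ne hθ₂ hθ₄ h4)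
      apply null_of_ae_slices
      · exact (by (simp only [aC, lX, lY]); fun_prop :
          Measurable fun z : ℝ × ℝ => aC θ₂ r₃ θ₃ r₄ θ₄ z.1 z.2) (measurableSet_singleton 0)
      have hae : ∀ᵐ t₄ : ℝ,
          ¬(0*t₄^2 + (-(Real.cos θ₂ * Real.sin θ₄ - Real.sin θ₂ * Real.cos θ₄))*t₄
            + (r₃ * (Real.cos θ₂ * Real.cos θ₃ + Real.sin θ₂ * Real.sin θ₃)
              - r₄ * (Real.cos θ₂ * Real.cos θ₄ + Real.sin θ₂ * Real.sin θ₄)) = 0) := by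
        rw [ae_iff]
        simp only [not_not]
        exact quad_null _ _ _ (Or.inr (Or.inl hB))
      filter_upwards [hae] with t₄ ht₄
      have hset : {t : ℝ | aC θ₂ r₃ θ₃ r₄ θ₄ t t₄ = 0}
          = {t : ℝ | 0*t^2 + (Real.cos θ₂ * Real.sin θ₃ - Real.sin θ₂ * Real.cos θ₃)*t
              + (-(Real.cos θ₂ * Real.sin θ₄ - Real.sin θ₂ * Real.cos θ₄) * t₄
                + (r₃ * (Real.cos θ₂ * Real.cos θ₃ + Real.sin θ₂ * Real.sin θ₃)
                  - r₄ * (Real.cos θ₂ * Real.cos θ₄ + Real.sin θ₂ * Real.sin θ₄))) = 0} := by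
        ext t
        rw [Set.mem_setOf_eq, Set.mem_setOf_eq, keyaC θ₂ r₃ θ₃ r₄ θ₄ t₄ t]
      rw [hset]
      apply quad_null
      refine Or.inr (Or.inr fun h0 => ht₄ ?_)
      linear_combination h0
  · -- θ₂ ≠ θ₃: the `t₃`-coefficient is nonzero
    have hA : Real.cos θ₂ * Real.sin θ₃ - Real.sin θ₂ * Real.cos θ₃ ≠ 0 :=
      sin_diff_ne hθ₂ hθ₃ h3
    apply null_of_ae_slices
    · exact (by (simp only [aC, lX, lY]); fun_prop :
        Measurable fun z : ℝ × ℝ => aC θ₂ r₃ θ₃ r₄ θ₄ z.1 z.2) (measurableSet_singleton 0)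
    refine Filter.Eventually.of_forall fun t₄ => ?_
    show volume {t : ℝ | aC θ₂ r₃ θ₃ r₄ θ₄ t t₄ = 0} = 0
    have hset : {t : ℝ | aC θ₂ r₃ θ₃ r₄ θ₄ t t₄ = 0}
        = {t : ℝ | 0*t^2 + (Real.cos θ₂ * Real.sin θ₃ - Real.sin θ₂ * Real.cos θ₃)*t
            + (-(Real.cos θ₂ * Real.sin θ₄ - Real.sin θ₂ * Real.cos θ₄) * t₄
              + (r₃ * (Real.cos θ₂ * Real.cos θ₃ + Real.sin θ₂ * Real.sin θ₃)
                - r₄ * (Real.cos θ₂ * Real.cos θ₄ + Real.sin θ₂ * Real.sin θ₄))) = 0} := by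
      ext t
      rw [Set.mem_setOf_eq, Set.mem_setOf_eq, keyaC θ₂ r₃ θ₃ r₄ θ₄ t₄ t]
    rw [hset]
    exact quad_null _ _ _ (Or.inr (Or.inl hA))

/-- The null set of `mC`. -/
lemma mC_null (r₂ θ₂ r₃ θ₃ r₄ θ₄ : ℝ)
    (hθ₂ : θ₂ ∈ Set.Ico 0 Real.pi) (hθ₃ : θ₃ ∈ Set.Ico 0 Real.pi)
    (hθ₄ : θ₄ ∈ Set.Ico 0 Real.pi)
    (h23 : (r₂, θ₂) ≠ (r₃, θ₃)) (h24 : (r₂, θ₂) ≠ (r₄, θ₄)) (h34 : (r₃, θ₃) ≠ (r₄, θ₄)) :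
    volume {y : ℝ × ℝ × ℝ | mC r₂ θ₂ r₃ θ₃ r₄ θ₄ y.1 y.2.1 y.2.2 = 0} = 0 := by
  apply null_of_ae_slices
  · exact (by (simp only [mC, lX, lY]); fun_prop :
      Measurable fun y : ℝ × ℝ × ℝ => mC r₂ θ₂ r₃ θ₃ r₄ θ₄ y.1 y.2.1 y.2.2)
      (measurableSet_singleton 0)
  have hae : ∀ᵐ z : ℝ × ℝ, aC θ₂ r₃ θ₃ r₄ θ₄ z.1 z.2 ≠ 0 := by
    rw [ae_iff]
    simp only [ne_eq, not_not]
    exact aC_null r₂ θ₂ r₃ θ₃ r₄ θ₄ hθ₂ hθ₃ hθ₄ h23 h24 h34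
  filter_upwards [hae] with z hz
  have hset : {t : ℝ | mC r₂ θ₂ r₃ θ₃ r₄ θ₄ t z.1 z.2 = 0}
      = {t : ℝ | 0*t^2 + (aC θ₂ r₃ θ₃ r₄ θ₄ z.1 z.2)*t
          + mC r₂ θ₂ r₃ θ₃ r₄ θ₄ 0 z.1 z.2 = 0} := by
    ext t
    rw [Set.mem_setOf_eq, Set.mem_setOf_eq, keymC r₂ θ₂ r₃ θ₃ r₄ θ₄ z.1 z.2 t]
  rw [hset]
  exact quad_null _ _ _ (Or.inr (Or.inl hz))

/-- One point on each of four pairwise distinct lines: the set of parameters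
`(t₁,t₂,t₃,t₄)` for which `p₁(t₁), p₂(t₂), p₃(t₃), p₄(t₄)` lie on a common circle has
Lebesgue measure zero in `ℝ⁴`. -/
theorem concyclic_four_lines_null (r₁ θ₁ r₂ θ₂ r₃ θ₃ r₄ θ₄ : ℝ)
    (hθ₁ : θ₁ ∈ Set.Ico 0 Real.pi) (hθ₂ : θ₂ ∈ Set.Ico 0 Real.pi)
    (hθ₃ : θ₃ ∈ Set.Ico 0 Real.pi) (hθ₄ : θ₄ ∈ Set.Ico 0 Real.pi)
    (h12 : (r₁, θ₁) ≠ (r₂, θ₂)) (h13 : (r₁, θ₁) ≠ (r₃, θ₃)) (h14 : (r₁, θ₁) ≠ (r₄, θ₄))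
    (h23 : (r₂, θ₂) ≠ (r₃, θ₃)) (h24 : (r₂, θ₂) ≠ (r₄, θ₄)) (h34 : (r₃, θ₃) ≠ (r₄, θ₄)) :
    MeasureTheory.volume
      {x : ℝ × ℝ × ℝ × ℝ | ∃ a : EuclideanSpace ℝ (Fin 2),
        ‖linePt r₁ θ₁ x.1 - a‖ = ‖linePt r₂ θ₂ x.2.1 - a‖ ∧
        ‖linePt r₂ θ₂ x.2.1 - a‖ = ‖linePt r₃ θ₃ x.2.2.1 - a‖ ∧
        ‖linePt r₃ θ₃ x.2.2.1 - a‖ = ‖linePt r₄ θ₄ x.2.2.2 - a‖} = 0 := by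
  apply measure_mono_null
    (t := {x : ℝ × ℝ × ℝ × ℝ |
      Dp r₁ θ₁ r₂ θ₂ r₃ θ₃ r₄ θ₄ x.1 x.2.1 x.2.2.1 x.2.2.2 = 0})
  · -- inclusion: concyclic parameters annihilate the determinant
    rintro ⟨t₁, t₂, t₃, t₄⟩ ⟨a, h1, h2, h3⟩
    simp only [Set.mem_setOf_eq] at *
    have e1 : (lX r₁ θ₁ t₁ - a 0)^2 + (lY r₁ θ₁ t₁ - a 1)^2
        = (lX r₂ θ₂ t₂ - a 0)^2 + (lY r₂ θ₂ t₂ - a 1)^2 := by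
      have h := congrArg (· ^ 2) h1
      simp only [sq_norm2] at h
      exact h
    have e2 : (lX r₂ θ₂ t₂ - a 0)^2 + (lY r₂ θ₂ t₂ - a 1)^2
        = (lX r₃ θ₃ t₃ - a 0)^2 + (lY r₃ θ₃ t₃ - a 1)^2 := by
      have h := congrArg (· ^ 2) h2
      simp only [sq_norm2] at h
      exact h
    have e3 : (lX r₃ θ₃ t₃ - a 0)^2 + (lY r₃ θ₃ t₃ - a 1)^2
        = (lX r₄ θ₄ t₄ - a 0)^2 + (lY r₄ θ₄ t₄ - a 1)^2 := by
      have h := congrArg (· ^ 2) h3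
      simp only [sq_norm2] at h
      exact h
    simp only [Dp, mC, lX, lY] at *
    linear_combination
      (((t₂ * Real.cos θ₂ - r₂ * Real.sin θ₂) - (t₃ * Real.cos θ₃ - r₃ * Real.sin θ₃))
        * ((t₃ * Real.sin θ₃ + r₃ * Real.cos θ₃) - (t₄ * Real.sin θ₄ + r₄ * Real.cos θ₄))
       - ((t₃ * Real.cos θ₃ - r₃ * Real.sin θ₃) - (t₄ * Real.cos θ₄ - r₄ * Real.sin θ₄))
        * ((t₂ * Real.sin θ₂ + r₂ * Real.cos θ₂) - (t₃ * Real.sin θ₃ + r₃ * Real.cos θ₃))) * e1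
      - (((t₁ * Real.cos θ₁ - r₁ * Real.sin θ₁) - (t₂ * Real.cos θ₂ - r₂ * Real.sin θ₂))
        * ((t₃ * Real.sin θ₃ + r₃ * Real.cos θ₃) - (t₄ * Real.sin θ₄ + r₄ * Real.cos θ₄))
       - ((t₃ * Real.cos θ₃ - r₃ * Real.sin θ₃) - (t₄ * Real.cos θ₄ - r₄ * Real.sin θ₄))
        * ((t₁ * Real.sin θ₁ + r₁ * Real.cos θ₁) - (t₂ * Real.sin θ₂ + r₂ * Real.cos θ₂))) * e2
      + (((t₁ * Real.cos θ₁ - r₁ * Real.sin θ₁) - (t₂ * Real.cos θ₂ - r₂ * Real.sin θ₂))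
        * ((t₂ * Real.sin θ₂ + r₂ * Real.cos θ₂) - (t₃ * Real.sin θ₃ + r₃ * Real.cos θ₃))
       - ((t₂ * Real.cos θ₂ - r₂ * Real.sin θ₂) - (t₃ * Real.cos θ₃ - r₃ * Real.sin θ₃))
        * ((t₁ * Real.sin θ₁ + r₁ * Real.cos θ₁) - (t₂ * Real.sin θ₂ + r₂ * Real.cos θ₂))) * e3
  · -- the zero set of the determinant is null
    apply null_of_ae_slices
    · exact (by (simp only [Dp, mC, lX, lY]); fun_prop :
        Measurable fun x : ℝ × ℝ × ℝ × ℝ =>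
          Dp r₁ θ₁ r₂ θ₂ r₃ θ₃ r₄ θ₄ x.1 x.2.1 x.2.2.1 x.2.2.2)
        (measurableSet_singleton 0)
    have hae : ∀ᵐ y : ℝ × ℝ × ℝ, mC r₂ θ₂ r₃ θ₃ r₄ θ₄ y.1 y.2.1 y.2.2 ≠ 0 := by
      rw [ae_iff]
      simp only [ne_eq, not_not]
      exact mC_null r₂ θ₂ r₃ θ₃ r₄ θ₄ hθ₂ hθ₃ hθ₄ h23 h24 h34
    filter_upwards [hae] with y hy
    have hset : {t : ℝ | Dp r₁ θ₁ r₂ θ₂ r₃ θ₃ r₄ θ₄ t y.1 y.2.1 y.2.2 = 0}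
        = {t : ℝ | (mC r₂ θ₂ r₃ θ₃ r₄ θ₄ y.1 y.2.1 y.2.2) * t^2
            + (Dp r₁ θ₁ r₂ θ₂ r₃ θ₃ r₄ θ₄ 1 y.1 y.2.1 y.2.2
               - Dp r₁ θ₁ r₂ θ₂ r₃ θ₃ r₄ θ₄ 0 y.1 y.2.1 y.2.2
               - mC r₂ θ₂ r₃ θ₃ r₄ θ₄ y.1 y.2.1 y.2.2) * t
            + Dp r₁ θ₁ r₂ θ₂ r₃ θ₃ r₄ θ₄ 0 y.1 y.2.1 y.2.2 = 0} := by
      ext t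
      rw [Set.mem_setOf_eq, Set.mem_setOf_eq,
        keyDp r₁ θ₁ r₂ θ₂ r₃ θ₃ r₄ θ₄ y.1 y.2.1 y.2.2 t]
    rw [hset]
    exact quad_null _ _ _ (Or.inl hy)
end

section
/- Fix r > 0. Then the integral ∫₀^r (1 − exp(−2μ·√(r² − u²))) du converges to r as μ → ∞, and it is monotone nondecreasing in μ. Consequently, for every λ > 0, the nearest-distance distribution function F_μ(r) = 1 − exp(−2λ·∫₀^r (1 − exp(−2μ·√(r² − u²))) du) of the Poisson line Cox process converges, as μ → ∞, to 1 − exp(−2λr), the distribution function of the distance from the origin to the nearest line of the Poisson line process. -/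
/-!
For `0 < u < r` the integrand `1 - exp (-2μ √(r² - u²))` is nondecreasing in `μ`, lies in
`[0, 1]` for `μ ≥ 0`, and tends to `1`; so the integral is monotone, and tends to `r` by
dominated convergence. The statement about `F_μ(r)` follows by continuity of
`x ↦ 1 - exp (-2λx)`.
-/

open Filter MeasureTheory Set Real Topology
open scoped Interval

theorem abs_one_sub_exp_neg_le_one {x : ℝ} (hx : 0 ≤ x) : |1 - exp (-x)| ≤ 1 := by
  have : exp (-x) ≤ 1 := exp_le_one_iff.mpr (neg_nonpos.mpr hx)
  rw [abs_le]
  constructor <;> linarith [exp_pos (-x)]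

theorem tendsto_one_sub_exp_neg_mul_atTop {c : ℝ} (hc : 0 < c) :
    Tendsto (fun t => 1 - exp (-(t * c))) atTop (𝓝 1) := by
  have h : Tendsto (fun t => -(t * c)) atTop atBot :=
    tendsto_neg_atTop_atBot.comp (tendsto_id.atTop_mul_const hc)
  simpa using tendsto_const_nhds.sub (tendsto_exp_atBot.comp h)

theorem monotone_one_sub_exp_neg_mul {c : ℝ} (hc : 0 ≤ c) :
    Monotone fun t => 1 - exp (-(t * c)) := fun s t hst => by
  have := mul_le_mul_of_nonneg_right hst hc
  simp only
  gcongr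

section IntegralOneSubExp

variable {g : ℝ → ℝ} {a b : ℝ}

theorem monotone_integral_one_sub_exp_neg_mul (hab : a ≤ b) (hg : ContinuousOn g (Icc a b))
    (hg_nonneg : ∀ u ∈ Icc a b, 0 ≤ g u) :
    Monotone fun t => ∫ u in a..b, (1 - exp (-(t * g u))) := fun s t hst => by
  have hint : ∀ t, IntervalIntegrable (fun u => 1 - exp (-(t * g u))) volume a b :=
    fun t => ContinuousOn.intervalIntegrable_of_Icc hab (by fun_prop)
  exact intervalIntegral.integral_mono_on hab (hint s) (hint t)
    fun u hu => monotone_one_sub_exp_neg_mul (hg_nonneg u hu) hst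

theorem tendsto_integral_one_sub_exp_neg_mul_atTop
    (hg : AEStronglyMeasurable g (volume.restrict (Ι a b)))
    (hg_pos : ∀ᵐ u, u ∈ Ι a b → 0 < g u) :
    Tendsto (fun t => ∫ u in a..b, (1 - exp (-(t * g u)))) atTop (𝓝 (b - a)) := by
  have h := intervalIntegral.tendsto_integral_filter_of_dominated_convergence (a := a) (b := b)
    (F := fun t u => 1 - exp (-(t * g u))) (f := fun _ => (1 : ℝ)) (μ := volume) (l := atTop)
    (fun _ => 1) (Eventually.of_forall fun t => aestronglyMeasurable_const.sub
      (continuous_exp.comp_aestronglyMeasurable (hg.const_mul t).neg)) ?_ intervalIntegrable_const ?_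
  · simpa using h
  · filter_upwards [eventually_ge_atTop 0] with t ht
    filter_upwards [hg_pos] with u hu hmem
    exact abs_one_sub_exp_neg_le_one (mul_nonneg ht (hu hmem).le)
  · filter_upwards [hg_pos] with u hu hmem
    exact tendsto_one_sub_exp_neg_mul_atTop (hu hmem)

end IntegralOneSubExp

/-- For fixed `r > 0`, the integral `∫₀^r (1 − e^{−2μ√(r²−u²)}) du` is nondecreasing in `μ`
and converges to `r` as `μ → ∞`; consequently the nearest-distance distribution function
`F_μ(r) = 1 − exp(−2λ ∫₀^r (1 − e^{−2μ√(r²−u²)}) du)` of the Poisson line Cox process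
converges, as `μ → ∞`, to `1 − exp(−2λr)`, the distribution function of the distance to
the nearest line. -/
theorem nearest_distance_limit (r : ℝ) (hr : 0 < r) :
    Tendsto (fun μ : ℝ => ∫ u in (0:ℝ)..r, (1 - Real.exp (-2 * μ * Real.sqrt (r ^ 2 - u ^ 2))))
      atTop (nhds r) ∧
    Monotone (fun μ : ℝ =>
      ∫ u in (0:ℝ)..r, (1 - Real.exp (-2 * μ * Real.sqrt (r ^ 2 - u ^ 2)))) ∧
    ∀ lam : ℝ, 0 < lam →
      Tendsto (fun μ : ℝ => 1 - Real.exp (-2 * lam *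
          ∫ u in (0:ℝ)..r, (1 - Real.exp (-2 * μ * Real.sqrt (r ^ 2 - u ^ 2)))))
        atTop (nhds (1 - Real.exp (-2 * lam * r))) := by
  have hexponent : ∀ μ u : ℝ, -2 * μ * √(r ^ 2 - u ^ 2) = -(μ * (2 * √(r ^ 2 - u ^ 2))) :=
    fun _ _ => by ring
  simp only [hexponent]
  have hg : Continuous fun u : ℝ => 2 * √(r ^ 2 - u ^ 2) := by fun_prop
  have hg_pos : ∀ᵐ u, u ∈ Ι 0 r → 0 < 2 * √(r ^ 2 - u ^ 2) := by
    filter_upwards [Measure.ae_ne volume r] with u hur hu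
    rw [uIoc_of_le hr.le] at hu
    have hu_lt : u < r := lt_of_le_of_ne hu.2 hur
    exact mul_pos two_pos (sqrt_pos.mpr (by nlinarith [hu.1]))
  have hlim := tendsto_integral_one_sub_exp_neg_mul_atTop hg.aestronglyMeasurable hg_pos
  rw [sub_zero] at hlim
  refine ⟨hlim, monotone_integral_one_sub_exp_neg_mul hr.le hg.continuousOn
    fun u _ => by positivity, fun lam _ => ?_⟩
  exact ((by fun_prop : Continuous fun x => 1 - exp (-2 * lam * x)).tendsto r).comp hlim
end
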